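/- Let W be a Coxeter group, I its set of involutions, and M₁ the ℚ[W]-module with basis (a_w)_{w∈I} where s·a_w = a_w + 2a_{sw} if sw = ws > w; s·a_w = -a_w if sw = ws < w; s·a_w = a_{sws} if sw ≠ ws. Extending scalars to any field, M₁ is generated as a W-module by the single element a₁ (the basis vector at the identity involution), provided 2 is invertible. -/

import Mathlib

/-!
Induct on the length of the involution `w ≠ 1`, and pick a left descent `s` of `w`. If `s`
commutes with `w`, then `w' = s w` is a shorter involution and `σ_s a_{w'} = a_{w'} + 2 a_w`, so
`a_w` is reached once `2` is inverted. Otherwise `w' = s w s` is an involution with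
`σ_s a_{w'} = a_w`, and it is shorter than `w`: `s` is also a right descent of `w`, and if
`ℓ(s w s) = ℓ(w)` the exchange condition applied to `s w s` would force `s w = w s` or a word for
`w` of length `ℓ(w) - 2`. Mathlib lacks the exchange condition; it follows from Tits' sign action
of `W` on `W × {±1}`, which shows that the parity of the number of occurrences of a reflection
in the right inversion sequence of a word depends only on the product of the word.
-/

open List

namespace CoxeterSystem

variable {B W : Type*} [Group W] {M : CoxeterMatrix B} (cs : CoxeterSystem M W)

local prefix:100 "s" => cs.simple
local prefix:100 "π" => cs.wordProd
local prefix:100 "ℓ" => cs.length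
local prefix:100 "ris" => cs.rightInvSeq
local prefix:100 "lis" => cs.leftInvSeq

theorem reverse_alternatingWord (i i' : B) (n : ℕ) :
    (alternatingWord i i' n).reverse =
      if Even n then alternatingWord i' i n else alternatingWord i i' n := by
  induction n generalizing i i' with
  | zero => simp [alternatingWord]
  | succ n ih =>
    conv_lhs => rw [alternatingWord_succ, concat_eq_append, reverse_append, ih]
    rcases Nat.even_or_odd n with hn | hn
    · simp [hn, Nat.even_add_one, alternatingWord_succ']
    · simp [hn, alternatingWord_succ']

theorem prod_map_alternatingWord_two_mul {G : Type*} [Monoid G] (f : B → G) (i i' : B) (m : ℕ) :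
    ((alternatingWord i i' (2 * m)).map f).prod = (f i * f i') ^ m := by
  induction m with
  | zero => simp [alternatingWord]
  | succ m ih =>
    rw [mul_add_one, alternatingWord_succ', alternatingWord_succ', if_neg (by simp [parity_simps]),
      if_pos (even_two_mul m), map_cons, map_cons, prod_cons, prod_cons, ih, pow_succ', mul_assoc]

theorem leftInvSeq_alternatingWord_two_mul (i i' : B) (p : ℕ) :
    lis (alternatingWord i i' (2 * p)) = (range (2 * p)).map (fun k ↦ s i * (s i' * s i) ^ k) := by
  refine ext_getElem (by simp) fun k hk _ ↦ ?_
  rw [length_leftInvSeq, length_alternatingWord] at hk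
  rw [getElem_leftInvSeq_alternatingWord cs i i' p k hk, getElem_map, getElem_range,
    prod_alternatingWord_eq_mul_pow, if_neg (by simp [parity_simps]),
    show (2 * k + 1) / 2 = k by omega]

theorem even_count_rightInvSeq_alternatingWord [DecidableEq W] (i i' : B) (t : W) :
    Even ((ris (alternatingWord i i' (2 * M i i'))).count t) := by
  have hperiod : ∀ k, s i' * (s i * s i') ^ (M i i' + k) = s i' * (s i * s i') ^ k := fun k ↦ by
    rw [pow_add, simple_mul_simple_pow, one_mul]
  rw [← reverse_reverse (alternatingWord i i' _), reverse_alternatingWord, if_pos (even_two_mul _),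
    rightInvSeq_reverse, count_reverse, leftInvSeq_alternatingWord_two_mul, two_mul, range_add,
    map_append, map_map]
  simp only [Function.comp_def, hperiod, count_append]
  exact ⟨_, rfl⟩

section SignAction

variable [DecidableEq W]

def signFlip (i : B) : Equiv.Perm (W × ℤˣ) :=
  Function.Involutive.toPerm (fun p ↦ (s i * p.1 * s i, if p.1 = s i then -p.2 else p.2)) <| by
    rintro ⟨t, ε⟩
    by_cases h : t = s i <;>
      simp [h, mul_assoc, mul_eq_one_iff_eq_inv, inv_simple, simple_mul_simple_cancel_left]

theorem signFlip_apply (i : B) (t : W) (ε : ℤˣ) :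
    cs.signFlip i (t, ε) = (s i * t * s i, if t = s i then -ε else ε) :=
  rfl

theorem prod_map_signFlip_apply (ω : List B) (t : W) (ε : ℤˣ) :
    (ω.map cs.signFlip).prod (t, ε) =
      (π ω * t * (π ω)⁻¹, (-1) ^ (ris ω).count t * ε) := by
  induction ω with
  | nil => simp
  | cons i ω ih =>
    rw [map_cons, prod_cons, Equiv.Perm.mul_apply, ih]
    simp only [signFlip_apply, rightInvSeq, wordProd_cons, count_cons, mul_inv_rev, inv_simple]
    refine Prod.ext (by group) ?_
    by_cases h : π ω * t * (π ω)⁻¹ = s i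
    · have ht : (π ω)⁻¹ * s i * π ω = t := by rw [← h]; group
      simp [h, ht, pow_succ]
    · have ht : ((π ω)⁻¹ * s i * π ω == t) = false := by
        rw [beq_eq_false_iff_ne]; rintro rfl; apply h; group
      simp [h, ht]

theorem isLiftable_signFlip : M.IsLiftable cs.signFlip := fun i i' ↦ by
  rw [← prod_map_alternatingWord_two_mul]
  refine Equiv.ext fun ⟨t, ε⟩ ↦ ?_
  rw [prod_map_signFlip_apply, prod_alternatingWord_eq_mul_pow, if_pos (even_two_mul _),
    Nat.mul_div_cancel_left _ two_pos, simple_mul_simple_pow,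
    (even_count_rightInvSeq_alternatingWord cs i i' t).neg_one_pow]
  simp

noncomputable def signRep : W →* Equiv.Perm (W × ℤˣ) := cs.lift ⟨cs.signFlip, cs.isLiftable_signFlip⟩

theorem signRep_wordProd (ω : List B) : cs.signRep (π ω) = (ω.map cs.signFlip).prod := by
  rw [wordProd, map_list_prod, map_map]
  congr 1
  exact map_congr_left fun i _ ↦ cs.lift_apply_simple cs.isLiftable_signFlip i

theorem neg_one_pow_count_rightInvSeq_congr {ω ω' : List B} (h : π ω = π ω') (t : W) :
    (-1 : ℤˣ) ^ (ris ω).count t = (-1) ^ (ris ω').count t := by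
  have := congrArg (fun f ↦ (f (t, 1)).2) (congrArg cs.signRep h)
  simpa [signRep_wordProd, prod_map_signFlip_apply] using this

end SignAction

theorem simple_mem_rightInvSeq_of_isRightDescent {ω : List B} {i : B}
    (hi : cs.IsRightDescent (π ω) i) : s i ∈ ris ω := by
  classical
  -- `τ ++ [i]` is a reduced word for `π ω` in which `s i` occurs exactly once.
  obtain ⟨τ, hτ, hτω⟩ := cs.exists_isReduced (π ω * s i)
  have hπ : π (τ.concat i) = π ω := by
    rw [wordProd_concat, ← hτω, simple_mul_simple_cancel_right]
  have hred : cs.IsReduced (τ.concat i) := by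
    rw [IsReduced, hπ, length_concat, ← hτ.eq, ← hτω, cs.isRightDescent_iff.1 hi]
  have hcount : (ris (τ.concat i)).count (s i) = 1 :=
    count_eq_one_of_mem hred.nodup_rightInvSeq (by rw [rightInvSeq_concat]; simp)
  have hsign := cs.neg_one_pow_count_rightInvSeq_congr hπ (s i)
  refine count_pos_iff.1 (Nat.pos_of_ne_zero fun h0 ↦ ?_)
  rw [hcount, h0] at hsign
  exact absurd hsign (by decide)

theorem exists_wordProd_eraseIdx_eq_mul_simple {ω : List B} {i : B}
    (hi : cs.IsRightDescent (π ω) i) : ∃ k < ω.length, π (ω.eraseIdx k) = π ω * s i := by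
  obtain ⟨k, hk, hki⟩ := mem_iff_getElem.1 (cs.simple_mem_rightInvSeq_of_isRightDescent hi)
  rw [length_rightInvSeq] at hk
  refine ⟨k, hk, ?_⟩
  rw [← wordProd_mul_getD_rightInvSeq, getD_eq_getElem _ _ (by rwa [length_rightInvSeq]), hki]

theorem length_simple_mul_mul_simple_lt {w : W} {i : B} (hl : cs.IsLeftDescent w i)
    (hr : cs.IsRightDescent w i) (hne : s i * w ≠ w * s i) : ℓ (s i * w * s i) < ℓ w := by
  have hl' := cs.isLeftDescent_iff.1 hl
  have hr' := cs.isRightDescent_iff.1 hr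
  rcases cs.length_mul_simple (s i * w) i with hgt | hlt
  · exfalso
    obtain ⟨τ, hτ, hτw⟩ := cs.exists_isReduced (w * s i)
    have hπ : π (i :: τ) = s i * w * s i := by rw [wordProd_cons, ← hτw, mul_assoc]
    have hdesc : cs.IsRightDescent (π (i :: τ)) i := by
      rw [IsRightDescent, hπ, simple_mul_simple_cancel_right]
      omega
    obtain ⟨k, hk, heq⟩ := cs.exists_wordProd_eraseIdx_eq_mul_simple hdesc
    rw [hπ, simple_mul_simple_cancel_right] at heq
    cases k with
    | zero => exact hne (by rw [← heq, eraseIdx_cons_zero, hτw])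
    | succ k =>
      rw [eraseIdx_cons_succ, wordProd_cons] at heq
      have hle := cs.length_wordProd_le (τ.eraseIdx k)
      rw [mul_left_cancel heq, length_eraseIdx_of_lt (by simpa using hk), ← hτ.eq, ← hτw] at hle
      omega
  · omega

theorem involution_induction {p : W → Prop} (one : p 1)
    (comm : ∀ w i, w * w = 1 → s i * w = w * s i → ℓ w < ℓ (s i * w) → p w → p (s i * w))
    (conj : ∀ w i, w * w = 1 → s i * w ≠ w * s i → ℓ w < ℓ (s i * w * s i) → p w →
      p (s i * w * s i))
    (w : W) (hw : w * w = 1) : p w := by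
  induction hn : ℓ w using Nat.strong_induction_on generalizing w with
  | _ n ih =>
    subst hn
    rcases eq_or_ne w 1 with rfl | hne
    · exact one
    obtain ⟨i, hi⟩ := cs.exists_leftDescent_of_ne_one hne
    have hinv : w⁻¹ = w := inv_eq_of_mul_eq_one_left hw
    have hri : cs.IsRightDescent w i := cs.isLeftDescent_inv_iff.1 (by rwa [hinv])
    by_cases hc : s i * w = w * s i
    · have hw' : (s i * w) * (s i * w) = 1 := by
        rw [mul_assoc, ← mul_assoc w, ← hc, mul_assoc, simple_mul_simple_cancel_left, hw]
      have hc' : s i * (s i * w) = s i * w * s i := by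
        rw [simple_mul_simple_cancel_left, hc, simple_mul_simple_cancel_right]
      have hstep := comm (s i * w) i hw' hc' (by rwa [simple_mul_simple_cancel_left])
        (ih _ hi _ hw' rfl)
      rwa [simple_mul_simple_cancel_left] at hstep
    · have hw' : (s i * w * s i) * (s i * w * s i) = 1 := by
        simp [mul_assoc, simple_mul_simple_cancel_left, ← mul_assoc w w, hw]
      have hback : s i * (s i * w * s i) * s i = w := by
        rw [mul_assoc, simple_mul_simple_cancel_right, simple_mul_simple_cancel_left]
      have hc' : s i * (s i * w * s i) ≠ s i * w * s i * s i := by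
        rwa [simple_mul_simple_cancel_right, ← mul_assoc, simple_mul_simple_cancel_left, ne_comm]
      have hlt := cs.length_simple_mul_mul_simple_lt hi hri hc
      have hstep := conj _ i hw' hc' (by rwa [hback]) (ih _ hlt _ hw' rfl)
      rwa [hback] at hstep

end CoxeterSystem

theorem Submodule.mem_of_add_two_nsmul_mem {K V : Type*} [DivisionRing K] [AddCommGroup V]
    [Module K V] {N : Submodule K V} (h2 : (2 : K) ≠ 0) {x y : V} (hx : x ∈ N)
    (hxy : x + 2 • y ∈ N) : y ∈ N := by
  have h2y : (2 : K) • y ∈ N := by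
    rw [ofNat_smul_eq_nsmul]
    simpa using N.sub_mem hxy hx
  exact (N.smul_mem_iff h2).1 h2y

open Finsupp

theorem M1_generated_by_a1_general {B W : Type*} [Group W] {M : CoxeterMatrix B}
    (cs : CoxeterSystem M W) (K : Type*) [Field K] (h2 : (2 : K) ≠ 0)
    (σ : B → ((W →₀ K) →ₗ[K] (W →₀ K)))
    (h1 : ∀ (i : B) (w : W), w * w = 1 →
      cs.simple i * w = w * cs.simple i →
      cs.length w < cs.length (cs.simple i * w) →
      σ i (single w 1) = single w 1 + 2 • single (cs.simple i * w) 1)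
    (h3 : ∀ (i : B) (w : W), w * w = 1 →
      cs.simple i * w ≠ w * cs.simple i →
      σ i (single w 1) = single (cs.simple i * w * cs.simple i) 1) :
    ∀ N : Submodule K (W →₀ K), single (1 : W) (1 : K) ∈ N →
      (∀ (i : B), ∀ m ∈ N, σ i m ∈ N) →
      ∀ w : W, w * w = 1 → single w (1 : K) ∈ N := by
  intro N h1N hσN
  refine cs.involution_induction h1N (fun w i hw hc hlen hmem ↦ ?_) (fun w i hw hc _ hmem ↦ ?_)
  · exact N.mem_of_add_two_nsmul_mem h2 hmem (h1 i w hw hc hlen ▸ hσN i _ hmem)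
  · exact h3 i w hw hc ▸ hσN i _ hmem

/-- over a field `K` in which `2` is invertible, the module `M₁` with basis
`(a_w)` indexed by the involutions of `W`, where `s·a_w = a_w + 2a_{sw}` if `sw = ws > w`,
`s·a_w = -a_w` if `sw = ws < w`, `s·a_w = a_{sws}` if `sw ≠ ws`, is generated as a
`W`-module by the single element `a₁`: any submodule containing `a₁` and stable under all
the operators `σ s` contains every basis vector `a_w`. -/
theorem M1_generated_by_a1 {B W : Type*} [Group W] [Finite W] {M : CoxeterMatrix B}
    (cs : CoxeterSystem M W) (K : Type*) [Field K] (h2 : (2 : K) ≠ 0)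
    (σ : B → ((W →₀ K) →ₗ[K] (W →₀ K)))
    (h1 : ∀ (i : B) (w : W), w * w = 1 →
      cs.simple i * w = w * cs.simple i →
      cs.length w < cs.length (cs.simple i * w) →
      σ i (single w 1) = single w 1 + 2 • single (cs.simple i * w) 1)
    (h2' : ∀ (i : B) (w : W), w * w = 1 →
      cs.simple i * w = w * cs.simple i →
      cs.length (cs.simple i * w) < cs.length w →
      σ i (single w 1) = - single w 1)
    (h3 : ∀ (i : B) (w : W), w * w = 1 →
      cs.simple i * w ≠ w * cs.simple i →
      σ i (single w 1) = single (cs.simple i * w * cs.simple i) 1) :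
    ∀ N : Submodule K (W →₀ K), single (1 : W) (1 : K) ∈ N →
      (∀ (i : B), ∀ m ∈ N, σ i m ∈ N) →
      ∀ w : W, w * w = 1 → single w (1 : K) ∈ N :=
  M1_generated_by_a1_general cs K h2 σ h1 h3
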